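/- A functor J : A ⥤ B between small categories is a lax epimorphism if and only if J is absolutely dense, i.e.: (i) the identity functor 𝟭_B, together with the identity natural transformation on J, is a left Kan extension of J along J; and (ii) this left Kan extension is preserved by every functor into Type: for every functor F : B ⥤ Type, the functor F together with the identity natural transformation on J ⋙ F is a left Kan extension of J ⋙ F along J. -/

import Mathlib

/-!
Precomposition with `J` is fully faithful on functors into `E` exactly when every `F : B ⥤ E`,
with the identity on `J ⋙ F`, is a left Kan extension of `J ⋙ F` along `J`; then so is `F` with
any isomorphism `K ≅ J ⋙ F`, which gives the case `F = 𝟭 B`. Absolute density is therefore the statement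
that precomposition is fully faithful on functors into `Type u`. This passes from small categories
to `Type u` because two functors `B ⥤ Type u` factor through the small full subcategory on their
values, and from `Type u` to any locally small `C` through the Yoneda embedding, since
precomposition on presheaf-valued functors is, after flipping, precomposition on `Type u`-valued
functors objectwise.
-/

open CategoryTheory

universe u

namespace CategoryTheory

/-- A functor `J : A ⥤ B` between small categories is a *lax epimorphism* (in the 2-category
`Cat` of small categories) if for every category `C`, the precomposition functor
`(B ⥤ C) ⥤ (A ⥤ C)` given by whiskering on the left with `J` is full and faithful. -/
def Functor.IsLaxEpi {A B : Type u} [SmallCategory A] [SmallCategory B] (J : A ⥤ B) : Prop :=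
  ∀ (C : Type u) [SmallCategory C],
    (((whiskeringLeft A B C).obj J).Full ∧ ((whiskeringLeft A B C).obj J).Faithful)

universe v

lemma Functor.isLeftKanExtension_iff_bijective {C D H : Type*} [Category C] [Category D]
    [Category H] {L : C ⥤ D} {F : C ⥤ H} (F' : D ⥤ H) (α : F ⟶ L ⋙ F') :
    F'.IsLeftKanExtension α ↔
      ∀ G : D ⥤ H, Function.Bijective (fun γ : F' ⟶ G => α ≫ whiskerLeft L γ) := by
  refine ⟨fun _ G => (F'.homEquivOfIsLeftKanExtension α G).bijective, fun h => ⟨⟨?_⟩⟩⟩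
  let homEquiv (G : LeftExtension L F) := Equiv.ofBijective _ (h G.right)
  have desc_fac (G : LeftExtension L F) := (homEquiv G).apply_symm_apply G.hom
  refine Limits.IsInitial.ofUniqueHom
    (fun G => StructuredArrow.homMk ((homEquiv G).symm G.hom) (desc_fac G)) fun G γ => ?_
  ext : 1
  exact (h G.right).injective ((StructuredArrow.w γ).trans (desc_fac G).symm)

lemma Functor.full_and_faithful_iff_map_bijective {C D : Type*} [Category C] [Category D]
    (Φ : C ⥤ D) : Φ.Full ∧ Φ.Faithful ↔ ∀ X Y : C, Function.Bijective (Φ.map : (X ⟶ Y) → _) :=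
  ⟨fun ⟨_, _⟩ _ _ => ⟨Φ.map_injective, Φ.map_surjective⟩,
    fun h => ⟨⟨(h _ _).surjective⟩, ⟨fun e => (h _ _).injective e⟩⟩⟩

lemma exists_smallCategory_fullyFaithful_factorization {B : Type u} [Category B] {D : Type*}
    [Category.{u} D] (F G : B ⥤ D) :
    ∃ (C : Type u) (_ : SmallCategory C) (ι : C ⥤ D) (F' G' : B ⥤ C),
      Nonempty ι.FullyFaithful ∧ F' ⋙ ι = F ∧ G' ⋙ ι = G :=
  ⟨InducedCategory D (Sum.elim F.obj G.obj), inferInstance, inducedFunctor _,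
    { obj := Sum.inl, map f := InducedCategory.homMk (F.map f) },
    { obj := Sum.inr, map f := InducedCategory.homMk (G.map f) },
    ⟨fullyFaithfulInducedFunctor _⟩, rfl, rfl⟩

section Precomposition

variable {A B : Type*} [Category A] [Category B] (J : A ⥤ B)

lemma Functor.isLeftKanExtension_id_iff_bijective {H : Type*} [Category H] (F : B ⥤ H) :
    F.IsLeftKanExtension (𝟙 (J ⋙ F)) ↔
      ∀ G : B ⥤ H, Function.Bijective (whiskerLeft J : (F ⟶ G) → (J ⋙ F ⟶ J ⋙ G)) := by
  simp only [isLeftKanExtension_iff_bijective, Category.id_comp]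

lemma Functor.isLeftKanExtension_of_isIso {H : Type*} [Category H] {F : B ⥤ H} {K : A ⥤ H}
    (hF : ∀ G : B ⥤ H, Function.Bijective (whiskerLeft J : (F ⟶ G) → (J ⋙ F ⟶ J ⋙ G)))
    (α : K ⟶ J ⋙ F) [IsIso α] : F.IsLeftKanExtension α :=
  (isLeftKanExtension_iff_bijective F α).2 fun G =>
    ((asIso α).symm.homFromEquiv (Z := J ⋙ G)).bijective.comp (hF G)

lemma Functor.bijective_whiskerLeft_comp_iff {C D : Type*} [Category C] [Category D]
    {G : C ⥤ D} (hG : G.FullyFaithful) (F₁ F₂ : B ⥤ C) :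
    Function.Bijective (whiskerLeft J : (F₁ ⋙ G ⟶ F₂ ⋙ G) → (J ⋙ F₁ ⋙ G ⟶ J ⋙ F₂ ⋙ G)) ↔
      Function.Bijective (whiskerLeft J : (F₁ ⟶ F₂) → (J ⋙ F₁ ⟶ J ⋙ F₂)) := by
  rw [← Function.Bijective.of_comp_iff _ ((hG.whiskeringRight B).map_bijective F₁ F₂),
    ← Function.Bijective.of_comp_iff' ((hG.whiskeringRight A).map_bijective (J ⋙ F₁) (J ⋙ F₂))]
  rfl

def Functor.FullyFaithful.whiskeringLeftObjFunctorCategory {D : Type*} [Category D]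
    (hJ : ((whiskeringLeft A B D).obj J).FullyFaithful) (E : Type*) [Category E] :
    ((whiskeringLeft A B (E ⥤ D)).obj J).FullyFaithful :=
  have flip_comm : (whiskeringLeft A B (E ⥤ D)).obj J ⋙ flipping.functor ≅
      flipping.functor ⋙ (Functor.whiskeringRight E _ _).obj ((whiskeringLeft A B D).obj J) :=
    Iso.refl _
  ((flipping.fullyFaithfulFunctor.comp (hJ.whiskeringRight E)).ofIso flip_comm.symm).ofCompFaithful

lemma Functor.bijective_whiskerLeft_of_type
    (hJ : ∀ F G : B ⥤ Type v, Function.Bijective (whiskerLeft J : (F ⟶ G) → (J ⋙ F ⟶ J ⋙ G)))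
    (D : Type*) [Category.{v} D] (F G : B ⥤ D) :
    Function.Bijective (whiskerLeft J : (F ⟶ G) → (J ⋙ F ⟶ J ⋙ G)) := by
  obtain ⟨hType⟩ :=
    (FullyFaithful.nonempty_iff_map_bijective ((whiskeringLeft A B (Type v)).obj J)).2 hJ
  exact (bijective_whiskerLeft_comp_iff J Yoneda.fullyFaithful F G).1
    ((hType.whiskeringLeftObjFunctorCategory J Dᵒᵖ).map_bijective _ _)

end Precomposition

lemma Functor.IsLaxEpi.bijective_whiskerLeft {A B : Type u} [SmallCategory A] [SmallCategory B]
    {J : A ⥤ B} (hJ : J.IsLaxEpi) {D : Type*} [Category.{u} D] (F G : B ⥤ D) :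
    Function.Bijective (whiskerLeft J : (F ⟶ G) → (J ⋙ F ⟶ J ⋙ G)) := by
  obtain ⟨C, _, ι, F', G', ⟨hι⟩, rfl, rfl⟩ := exists_smallCategory_fullyFaithful_factorization F G
  exact (bijective_whiskerLeft_comp_iff J hι F' G').2
    ((full_and_faithful_iff_map_bijective _).1 (hJ C) F' G')

/-- A functor `J : A ⥤ B` between small categories is a lax epimorphism if and only if it is
*absolutely dense*: the identity functor of `B` (with the identity transformation on `J`,
encoded via the right unitor `J ≅ J ⋙ 𝟭 B`) is a left Kan extension of `J` along `J`, and
this left Kan extension is preserved by every functor `F : B ⥤ Type u`, i.e. `F` together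
with the identity transformation on `J ⋙ F` is a left Kan extension of `J ⋙ F` along `J`. -/
theorem Functor.isLaxEpi_iff_absolutely_dense {A B : Type u} [SmallCategory A]
    [SmallCategory B] (J : A ⥤ B) :
    J.IsLaxEpi ↔
      ((𝟭 B).IsLeftKanExtension ((J.rightUnitor).inv : J ⟶ J ⋙ 𝟭 B) ∧
        ∀ F : B ⥤ Type u,
          F.IsLeftKanExtension ((𝟙 (J ⋙ F)) : J ⋙ F ⟶ J ⋙ F)) := by
  constructor
  · intro hJ
    exact ⟨isLeftKanExtension_of_isIso J (hJ.bijective_whiskerLeft (𝟭 B)) _,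
      fun F => (isLeftKanExtension_id_iff_bijective J F).2 (hJ.bijective_whiskerLeft F)⟩
  · rintro ⟨-, hType⟩ C _
    exact (full_and_faithful_iff_map_bijective _).2 <| bijective_whiskerLeft_of_type J
      (fun F => (isLeftKanExtension_id_iff_bijective J F).1 (hType F)) C

end CategoryTheory
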